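/- arXiv:2107.03238 — 3 statements merged into one kernel-verified Lean document; each statement's English description precedes it below -/
import Mathlib

section
/- The set X = { z ↦ e^{−εz²} g(z) : ε>0, g ∈ A²(Π) } is a dense subspace of A²(Π), and for every f ∈ X and every η ∈ [−π,π] the Floquet series (2π)^{-1/2} Σ_{m∈ℤ} e^{−iηm} f(z+m) converges uniformly on compact subsets of the interior ϖ_U of cl(ϖ₋₁ ∪ ϖ ∪ ϖ₁) (where ϖ_m = ϖ+m), so that F f(·,η) is analytic on ϖ and extends analytically to a neighborhood in Π of cl(ϖ) ∩ Π. -/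
open Complex MeasureTheory Set Filter Topology

noncomputable section

def A2 (Ω : Set ℂ) : Set (ℂ → ℂ) :=
  {f | DifferentiableOn ℂ f Ω ∧ MemLp f 2 (volume.restrict Ω)}

def L2S (Ω : Set ℂ) : Set (ℂ → ℂ) :=
  {f | MemLp f 2 (volume.restrict Ω)}

def L2w (V : ℂ → ℝ) (Ω : Set ℂ) : Set (ℂ → ℂ) :=
  {f | AEStronglyMeasurable f (volume.restrict Ω) ∧
    IntegrableOn (fun z => ‖f z‖ ^ 2 * V z) Ω}

def A2w (V : ℂ → ℝ) (Ω : Set ℂ) : Set (ℂ → ℂ) :=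
  {f | DifferentiableOn ℂ f Ω ∧ IntegrableOn (fun z => ‖f z‖ ^ 2 * V z) Ω}

def PiDom (ϖ : Set ℂ) : Set ℂ :=
  interior (⋃ m : ℤ, closure ((fun z => z + (m : ℂ)) '' ϖ))

def Jplus (a b : ℝ) : Set ℂ := {z : ℂ | z.re = 1 ∧ z.im ∈ Ioo a b}
def Jminus (a b : ℝ) : Set ℂ := {z : ℂ | z.re = 0 ∧ z.im ∈ Ioo a b}

def cellOK (ϖ : Set ℂ) (M a b : ℝ) : Prop :=
  IsOpen ϖ ∧ IsConnected ϖ ∧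
  ϖ ⊆ {z : ℂ | 0 < z.re ∧ z.re < 1 ∧ -M < z.im ∧ z.im < M} ∧
  closure ϖ ∩ {z : ℂ | z.re = 0} = {z : ℂ | z.re = 0 ∧ z.im ∈ Icc a b} ∧
  closure ϖ ∩ {z : ℂ | z.re = 1} = {z : ℂ | z.re = 1 ∧ z.im ∈ Icc a b}

def Emap (z : ℂ) : ℂ := Complex.exp (2 * Real.pi * Complex.I * z)

def Dom (ϖ : Set ℂ) (a b : ℝ) : Set ℂ := Emap '' (ϖ ∪ Jplus a b ∪ Jminus a b)

def DomSlit (ϖ : Set ℂ) : Set ℂ := Emap '' ϖ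

def annulus (ρ : ℝ) : Set ℂ := {z : ℂ | 1 / ρ < ‖z‖ ∧ ‖z‖ < ρ}

def ConformalBijOn (f : ℂ → ℂ) (U V : Set ℂ) : Prop :=
  DifferentiableOn ℂ f U ∧ InjOn f U ∧ f '' U = V

def posReal : Set ℂ := {z : ℂ | z.im = 0 ∧ 0 < z.re}

def Gammacut (ϕ : ℂ → ℂ) (ϖ : Set ℂ) (a b : ℝ) : Set ℂ := ϕ '' (Dom ϖ a b ∩ posReal)

def AssumptionA (Γ : Set ℂ) : Prop :=
  ∃ δ : ℝ, 0 < δ ∧ δ < 1 ∧ Γ ⊆ {z : ℂ | δ < Complex.arg z ∧ Complex.arg z < Real.pi - δ}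

def BranchOn (logA ϕ : ℂ → ℂ) (ϖ : Set ℂ) (a b ρ : ℝ) : Prop :=
  (∀ z ∈ annulus ρ, Complex.exp (logA z) = z) ∧
  DifferentiableOn ℂ logA (annulus ρ \ Gammacut ϕ ϖ a b) ∧
  (∀ z ∈ annulus ρ, (logA z).im ∈ Icc 0 (3 * Real.pi)) ∧
  ∀ ζ ∈ Gammacut ϕ ϖ a b,
    Tendsto logA (𝓝[(ϕ ∘ Emap) '' (ϖ ∩ {z : ℂ | z.re < 1/2})] ζ)
      (𝓝 (logA ζ - 2 * Real.pi * Complex.I)) ∧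
    Tendsto logA (𝓝[(ϕ ∘ Emap) '' (ϖ ∩ {z : ℂ | 1/2 ≤ z.re})] ζ) (𝓝 (logA ζ))

def phiMap (logA ϕ : ℂ → ℂ) (z : ℂ) : ℂ :=
  (2 * Real.pi * Complex.I)⁻¹ * logA (ϕ (Emap z)) + (⌊z.re⌋ : ℂ)

def strip (c : ℝ) : Set ℂ := {z : ℂ | -c < z.im ∧ z.im < c}

def sech (z : ℂ) : ℂ := 2 / (Complex.exp z + Complex.exp (-z))

def Ktilde (logA ϕ : ℂ → ℂ) (z w : ℂ) : ℂ :=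
  Complex.exp (2 * Real.pi * Complex.I *
      (z - phiMap logA ϕ z - (starRingEnd ℂ) w + (starRingEnd ℂ) (phiMap logA ϕ w))) *
    deriv ϕ (Emap z) * (starRingEnd ℂ) (deriv ϕ (Emap w))

def KPi (logA ϕ : ℂ → ℂ) (ρ : ℝ) (z w : ℂ) : ℂ :=
  Ktilde logA ϕ z w * ((Real.pi : ℂ) ^ 3 / (4 * (Real.log ρ : ℂ) ^ 2)) *
    sech ((Real.pi : ℂ) ^ 2 * (phiMap logA ϕ z - (starRingEnd ℂ) (phiMap logA ϕ w)) /
      (2 * (Real.log ρ : ℂ))) ^ 2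

def A2ext (ϖ Pid : Set ℂ) (a b η : ℝ) : Set (ℂ → ℂ) :=
  {f | f ∈ A2 ϖ ∧ ∃ U F, IsOpen U ∧ U ⊆ Pid ∧ closure ϖ ∩ Pid ⊆ U ∧
    DifferentiableOn ℂ F U ∧ EqOn f F ϖ ∧
    ∀ y : ℝ, a < y → y < b →
      F (1 + y * Complex.I) = Complex.exp (η * Complex.I) * F (y * Complex.I)}

def A2eta (ϖ Pid : Set ℂ) (a b η : ℝ) : Set (ℂ → ℂ) :=
  {f | f ∈ A2 ϖ ∧ ∀ ε > 0, ∃ g ∈ A2ext ϖ Pid a b η, (∫ z in ϖ, ‖f z - g z‖ ^ 2) < ε}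

def floquetSum (f : ℂ → ℂ) (η : ℝ) (N : ℕ) (z : ℂ) : ℂ :=
  (Real.sqrt (2 * Real.pi) : ℂ)⁻¹ *
    ∑ m ∈ Finset.Icc (-(N : ℤ)) (N : ℤ),
      Complex.exp (-(Complex.I * (η : ℂ) * (m : ℂ))) * f (z + (m : ℂ))

def floquet (f : ℂ → ℂ) (z : ℂ) (η : ℝ) : ℂ :=
  (Real.sqrt (2 * Real.pi) : ℂ)⁻¹ *
    ∑' m : ℤ, Complex.exp (-(Complex.I * (η : ℂ) * (m : ℂ))) * f (z + (m : ℂ))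

def logD (z : ℂ) : ℂ :=
  if 0 < (Complex.log z).im then Complex.log z else Complex.log z + 2 * Real.pi * Complex.I

def Lmap (z : ℂ) : ℂ := (2 * Real.pi * Complex.I)⁻¹ * logD z

def Wweight (z : ℂ) : ℝ := 1 / (4 * Real.pi ^ 2 * (‖z‖) ^ 2)

def A2Weta (ϖ : Set ℂ) (a b η : ℝ) : Set (ℂ → ℂ) :=
  {f | f ∈ A2w Wweight (DomSlit ϖ) ∧ ∀ ε > 0, ∃ g ∈ A2w Wweight (Dom ϖ a b),
    (∫ z in DomSlit ϖ,
      ‖f z - Complex.exp (((η / (2 * Real.pi) : ℝ) : ℂ) * logD z) * g z‖ ^ 2 * Wweight z) < ε}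

def Vweight (ψ : ℂ → ℂ) (z : ℂ) : ℝ :=
  ‖deriv ψ z‖ ^ 2 / (4 * Real.pi ^ 2 * ‖ψ z‖ ^ 2)

def A2Veta (logA : ℂ → ℂ) (V : ℂ → ℝ) (Aslit Afull : Set ℂ) (η : ℝ) : Set (ℂ → ℂ) :=
  {f | f ∈ A2w V Aslit ∧ ∀ ε > 0, ∃ g ∈ A2w V Afull,
    (∫ z in Aslit,
      ‖f z - Complex.exp (((η / (2 * Real.pi) : ℝ) : ℂ) * logA z) * g z‖ ^ 2 * V z) < ε}

/-- The enlarged cell `ϖ_U`, the interior of `cl(ϖ₋₁ ∪ ϖ ∪ ϖ₁)`. -/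
def cellU (ϖ : Set ℂ) : Set ℂ :=
  interior (closure (((fun z => z + (-1 : ℂ)) '' ϖ) ∪ ϖ ∪ ((fun z => z + (1 : ℂ)) '' ϖ)))

/-- The subspace `X = { z ↦ e^{−εz²} g(z) : ε > 0, g ∈ A²(Π) }`. -/
def Xspace (ϖ : Set ℂ) : Set (ℂ → ℂ) :=
  {h | ∃ ε : ℝ, 0 < ε ∧ ∃ g ∈ A2 (PiDom ϖ),
    h = fun z => Complex.exp (-(ε : ℂ) * z ^ 2) * g z}

/-!
Since `Π` lies in the strip `|Im z| ≤ M`, the Gaussian `e^{-εz²}` is bounded by `e^{εM²}` on `Π`: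
multiplication by it preserves `A²(Π)`, and as `ε → 0⁺` it tends to `1` boundedly, so `X` is
dense by dominated convergence. For `f = e^{-εz²} g ∈ X` and a compact `K ⊆ ϖ_U ⊆ Π`, the mean
value property over discs of a fixed radius bounds `g` on all integer translates `K + m` by the
`L²` norm of `g`, while the Gaussian decays like `e^{-εm²}` along them. The Weierstrass M-test
gives uniform convergence of the Floquet series on `K`, hence a holomorphic sum on `ϖ_U`.
-/

open Real Metric

lemma norm_cexp_neg_ofReal_mul_sq (ε : ℝ) (z : ℂ) :
    ‖cexp (-(ε : ℂ) * z ^ 2)‖ = rexp (ε * (z.im ^ 2 - z.re ^ 2)) := by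
  rw [Complex.norm_exp]
  congr 1
  simp only [neg_mul, Complex.neg_re, Complex.mul_re, Complex.ofReal_re, Complex.ofReal_im, sq,
    Complex.mul_im]
  ring

lemma norm_cexp_neg_ofReal_mul_sq_le {ε M : ℝ} (hε : 0 ≤ ε) {z : ℂ} (hz : |z.im| ≤ M) :
    ‖cexp (-(ε : ℂ) * z ^ 2)‖ ≤ rexp (ε * M ^ 2) := by
  rw [norm_cexp_neg_ofReal_mul_sq, exp_le_exp]
  have : z.im ^ 2 ≤ M ^ 2 := sq_le_sq' (abs_le.1 hz).1 (abs_le.1 hz).2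
  nlinarith [sq_nonneg z.re]

lemma norm_cexp_neg_ofReal_mul_sq_add_intCast_le {ε M R : ℝ} (hε : 0 ≤ ε) {z : ℂ} {m : ℤ}
    (hM : |(z + m).im| ≤ M) (hR : |z.re| ≤ R) :
    ‖cexp (-(ε : ℂ) * (z + m) ^ 2)‖ ≤
      rexp (ε * M ^ 2) * rexp (-(ε * m ^ 2 - 2 * ε * R * |(m : ℝ)|)) := by
  rw [norm_cexp_neg_ofReal_mul_sq, ← Real.exp_add, exp_le_exp]
  have him : (z + m).im ^ 2 ≤ M ^ 2 := sq_le_sq' (abs_le.1 hM).1 (abs_le.1 hM).2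
  have hcross : -(R * |(m : ℝ)|) ≤ z.re * m := by
    have := abs_mul z.re m ▸ neg_abs_le (z.re * m)
    nlinarith [abs_nonneg (m : ℝ)]
  simp only [Complex.add_re, Complex.intCast_re] at him ⊢
  nlinarith [sq_nonneg z.re]

lemma summable_exp_neg_mul_sq_sub (ε R : ℝ) (hε : 0 < ε) :
    Summable fun m : ℤ => rexp (-(ε * m ^ 2 - 2 * ε * R * |(m : ℝ)|)) := by
  have := summable_pow_mul_jacobiTheta₂_term_bound (ε * R / π) (div_pos hε pi_pos) 0
  convert this using 2 with m
  rw [pow_zero, one_mul, Int.cast_abs]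
  congr 1
  field_simp

section Strip

variable {Ω : Set ℂ} {M : ℝ}

lemma gaussian_mul_mem_A2 (hΩ : MeasurableSet Ω) (hM : ∀ z ∈ Ω, |z.im| ≤ M) {ε : ℝ}
    (hε : 0 ≤ ε) {g : ℂ → ℂ} (hg : g ∈ A2 Ω) :
    (fun z => cexp (-(ε : ℂ) * z ^ 2) * g z) ∈ A2 Ω := by
  have hdiff : Differentiable ℂ fun z : ℂ => cexp (-(ε : ℂ) * z ^ 2) := by fun_prop
  refine ⟨hdiff.differentiableOn.mul hg.1, hg.2.of_le_mul (c := rexp (ε * M ^ 2))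
    (hdiff.continuous.aestronglyMeasurable.mul hg.2.1) ?_⟩
  refine ae_restrict_of_forall_mem hΩ fun z hz => ?_
  rw [norm_mul]
  exact mul_le_mul_of_nonneg_right (norm_cexp_neg_ofReal_mul_sq_le hε (hM z hz)) (norm_nonneg _)

lemma tendsto_setIntegral_norm_sub_gaussian_mul_sq (hΩ : MeasurableSet Ω)
    (hM : ∀ z ∈ Ω, |z.im| ≤ M) {f : ℂ → ℂ} (hf : MemLp f 2 (volume.restrict Ω)) :
    Tendsto (fun ε : ℝ => ∫ z in Ω, ‖f z - cexp (-(ε : ℂ) * z ^ 2) * f z‖ ^ 2) (𝓝[>] 0)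
      (𝓝 0) := by
  have hf2 : IntegrableOn (fun z => ‖f z‖ ^ 2) Ω := hf.integrable_norm_pow two_ne_zero
  have hfac (ε : ℝ) (z : ℂ) : f z - cexp (-(ε : ℂ) * z ^ 2) * f z
      = (1 - cexp (-(ε : ℂ) * z ^ 2)) * f z := by ring
  suffices Tendsto (fun ε : ℝ => ∫ z in Ω, ‖f z - cexp (-(ε : ℂ) * z ^ 2) * f z‖ ^ 2)
      (𝓝[>] 0) (𝓝 (∫ _ in Ω, (0 : ℝ))) by simpa using this
  refine tendsto_integral_filter_of_dominated_convergence
    (fun z => (1 + rexp (M ^ 2)) ^ 2 * ‖f z‖ ^ 2) (.of_forall fun ε => ?_) ?_ (hf2.const_mul _)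
    (.of_forall fun z => ?_)
  · exact ((hf.1.sub ((by fun_prop : Continuous fun z : ℂ => cexp (-(ε : ℂ) * z ^ 2))
      |>.aestronglyMeasurable.mul hf.1)).norm.pow 2)
  · filter_upwards [Ioo_mem_nhdsGT zero_lt_one] with ε hε
    refine ae_restrict_of_forall_mem hΩ fun z hz => ?_
    have hgauss : ‖cexp (-(ε : ℂ) * z ^ 2)‖ ≤ rexp (M ^ 2) :=
      (norm_cexp_neg_ofReal_mul_sq_le hε.1.le (hM z hz)).trans
        (exp_le_exp.2 (mul_le_of_le_one_left (sq_nonneg M) hε.2.le))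
    rw [Real.norm_of_nonneg (by positivity), hfac, norm_mul, mul_pow]
    gcongr
    exact (norm_sub_le _ _).trans (by rw [norm_one]; linarith)
  · have : Continuous fun ε : ℝ => ‖f z - cexp (-(ε : ℂ) * z ^ 2) * f z‖ ^ 2 := by fun_prop
    simpa using (this.tendsto 0).mono_left nhdsWithin_le_nhds

end Strip

section DiscMean

variable {E : Type*} [NormedAddCommGroup E] [NormedSpace ℝ E]

lemma integral_Ioo_smul_circleMap_eq (h : ℂ → E) (w : ℂ) (s : ℝ) :
    ∫ θ in Ioo (-π) π, s • h (circleMap w s θ) = (2 * π * s) • circleAverage h w s := by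
  have hper : Function.Periodic (fun θ => h (circleMap w s θ)) (2 * π) :=
    fun θ => by simp only [periodic_circleMap w s θ]
  have h2π := hper.intervalIntegral_add_eq (-π) 0
  rw [show -π + 2 * π = π by ring, zero_add] at h2π
  rw [circleAverage_def, ← h2π, ← integral_Ioc_eq_integral_Ioo,
    ← intervalIntegral.integral_of_le (by linarith [pi_pos]), intervalIntegral.integral_smul,
    smul_smul]
  congr 1
  field_simp

lemma setIntegral_ball_eq_integral_circleAverage {h : ℂ → E} {w : ℂ} {r : ℝ}
    (hh : ContinuousOn h (closedBall w r)) :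
    ∫ z in ball w r, h z = ∫ s in Ioo 0 r, (2 * π * s) • circleAverage h w s := by
  have hsymm : ∀ p : ℝ × ℝ, w + Complex.polarCoord.symm p = circleMap w p.1 p.2 := fun p => by
    rw [Complex.polarCoord_symm_apply, circleMap, ← Complex.cos_add_sin_I]
    push_cast; ring
  have htarget : polarCoord.target ∩ {p | circleMap w p.1 p.2 ∈ ball w r} =
      Ioo 0 r ×ˢ Ioo (-π) π := by
    ext ⟨s, θ⟩
    simp only [polarCoord_target, mem_inter_iff, mem_prod, mem_Ioi, mem_ofPred_eq, mem_ball,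
      dist_eq_norm, circleMap_sub_center, norm_circleMap_zero, mem_Ioo]
    constructor
    · rintro ⟨⟨hs, hθ⟩, hsr⟩; exact ⟨⟨hs, by rwa [abs_of_pos hs] at hsr⟩, hθ⟩
    · rintro ⟨⟨hs, hsr⟩, hθ⟩; exact ⟨⟨hs, hθ⟩, by rwa [abs_of_pos hs]⟩
  have hint : IntegrableOn (fun p : ℝ × ℝ => p.1 • h (circleMap w p.1 p.2))
      (Ioo 0 r ×ˢ Ioo (-π) π) := by
    refine (ContinuousOn.integrableOn_compact (isCompact_Icc.prod isCompact_Icc) ?_).mono_set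
      (prod_mono Ioo_subset_Icc_self Ioo_subset_Icc_self)
    refine continuous_fst.continuousOn.smul (hh.comp (by fun_prop) fun p hp => ?_)
    simpa [dist_eq_norm, abs_of_nonneg hp.1.1] using hp.1.2
  calc ∫ z in ball w r, h z = ∫ z, (ball w r).indicator h (w + z) := by
        rw [integral_add_left_eq_self, integral_indicator measurableSet_ball]
    _ = ∫ p in polarCoord.target, {p : ℝ × ℝ | circleMap w p.1 p.2 ∈ ball w r}.indicator
          (fun p => p.1 • h (circleMap w p.1 p.2)) p := by
        rw [← Complex.integral_comp_polarCoord_symm]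
        refine setIntegral_congr_fun polarCoord.open_target.measurableSet fun p _ => ?_
        rw [hsymm, indicator_smul_apply, ← indicator_comp_right]
        rfl
    _ = ∫ s in Ioo 0 r, ∫ θ in Ioo (-π) π, s • h (circleMap w s θ) := by
        have hmeas : MeasurableSet {p : ℝ × ℝ | circleMap w p.1 p.2 ∈ ball w r} :=
          measurableSet_ball.preimage (by fun_prop)
        rw [setIntegral_indicator hmeas, htarget,
          Measure.volume_eq_prod, setIntegral_prod _ hint]
    _ = ∫ s in Ioo 0 r, (2 * π * s) • circleAverage h w s := by
        simp only [integral_Ioo_smul_circleMap_eq]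

end DiscMean

variable {E : Type*} [NormedAddCommGroup E] [NormedSpace ℂ E] [CompleteSpace E] in
lemma DifferentiableOn.setIntegral_ball_eq {g : ℂ → E} {w : ℂ} {r : ℝ} (hr : 0 ≤ r)
    (hg : DifferentiableOn ℂ g (closedBall w r)) :
    ∫ z in ball w r, g z = (π * r ^ 2) • g w := by
  have hmean : ∀ s ∈ Ioo 0 r, circleAverage g w s = g w := fun s hs => by
    refine DiffContOnCl.circleAverage (DifferentiableOn.diffContOnCl ?_)
    rw [abs_of_pos hs.1, closure_ball w hs.1.ne']
    exact hg.mono (closedBall_subset_closedBall hs.2.le)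
  rw [setIntegral_ball_eq_integral_circleAverage hg.continuousOn,
    setIntegral_congr_fun measurableSet_Ioo fun s hs => by rw [hmean s hs],
    integral_smul_const, ← integral_Ioc_eq_integral_Ioo, ← intervalIntegral.integral_of_le hr,
    intervalIntegral.integral_const_mul, integral_id]
  congr 1
  ring

lemma mul_sq_norm_le_setIntegral_sq_norm {g : ℂ → ℂ} {U : Set ℂ} (hg : DifferentiableOn ℂ g U)
    (hgU : IntegrableOn (fun z => ‖g z‖ ^ 2) U) {w : ℂ} {r : ℝ} (hr : 0 ≤ r)
    (hwr : closedBall w r ⊆ U) :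
    π * r ^ 2 * ‖g w‖ ^ 2 ≤ ∫ z in U, ‖g z‖ ^ 2 := by
  -- the mean value property for `g ^ 2` avoids any Cauchy–Schwarz step
  have hmean := ((hg.mono hwr).fun_pow 2).setIntegral_ball_eq hr
  calc π * r ^ 2 * ‖g w‖ ^ 2 = ‖∫ z in ball w r, g z ^ 2‖ := by
        rw [hmean, norm_smul, norm_pow, Real.norm_of_nonneg (by positivity)]
    _ ≤ ∫ z in ball w r, ‖g z‖ ^ 2 := by
        simp only [← norm_pow]
        exact norm_integral_le_integral_norm _
    _ ≤ ∫ z in U, ‖g z‖ ^ 2 :=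
        setIntegral_mono_set hgU (.of_forall fun z => by positivity)
          (.of_forall (ball_subset_closedBall.trans hwr))

section PeriodicDomain

variable {ϖ : Set ℂ}

lemma isOpen_piDom : IsOpen (PiDom ϖ) := isOpen_interior

lemma abs_im_le_of_mem_piDom {M : ℝ} (hϖ : ∀ z ∈ ϖ, |z.im| ≤ M) {z : ℂ}
    (hz : z ∈ PiDom ϖ) : |z.im| ≤ M := by
  obtain ⟨_, ⟨m, rfl⟩, hzm⟩ := interior_subset hz
  have hclosed : IsClosed {w : ℂ | |w.im| ≤ M} :=
    isClosed_le (by fun_prop : Continuous fun w : ℂ => |w.im|) continuous_const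
  refine closure_minimal ?_ hclosed hzm
  rintro _ ⟨w, hw, rfl⟩
  simpa using hϖ w hw

lemma re_mem_Icc_of_mem_closure_image_add (hϖ : ∀ z ∈ ϖ, z.re ∈ Icc (0 : ℝ) 1) (k : ℤ) {z : ℂ}
    (hz : z ∈ closure ((fun z => z + (k : ℂ)) '' ϖ)) : z.re ∈ Icc (k : ℝ) (k + 1) := by
  refine closure_minimal ?_ (isClosed_Icc.preimage Complex.continuous_re) hz
  rintro _ ⟨w, hw, rfl⟩
  have := hϖ w hw
  simp only [mem_preimage, Complex.add_re, Complex.intCast_re, mem_Icc] at this ⊢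
  constructor <;> linarith [this.1, this.2]

lemma image_add_intCast_closure_image_add (k m : ℤ) :
    (fun z => z + (m : ℂ)) '' closure ((fun z => z + (k : ℂ)) '' ϖ) =
      closure ((fun z => z + ((k + m : ℤ) : ℂ)) '' ϖ) := by
  calc (fun z => z + (m : ℂ)) '' closure ((fun z => z + (k : ℂ)) '' ϖ)
      = closure ((fun z => z + (m : ℂ)) '' ((fun z => z + (k : ℂ)) '' ϖ)) :=
        (Homeomorph.addRight (m : ℂ)).image_closure _
    _ = closure ((fun z => z + ((k + m : ℤ) : ℂ)) '' ϖ) := by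
        rw [image_image]
        congr 2
        funext z
        push_cast
        ring

lemma add_intCast_mem_piDom (m : ℤ) {z : ℂ} (hz : z ∈ PiDom ϖ) : z + m ∈ PiDom ϖ := by
  have hshift : (fun z => z + (m : ℂ)) '' ⋃ k : ℤ, closure ((fun z => z + (k : ℂ)) '' ϖ) ⊆
      ⋃ k : ℤ, closure ((fun z => z + (k : ℂ)) '' ϖ) := by
    rw [image_iUnion]
    exact iUnion_subset fun k => (image_add_intCast_closure_image_add k m).symm ▸
      subset_iUnion (fun k : ℤ => closure ((fun z => z + (k : ℂ)) '' ϖ)) (k + m)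
  have hopen : (fun w => w + (m : ℂ)) '' PiDom ϖ =
      interior ((fun w => w + (m : ℂ)) '' ⋃ k : ℤ, closure ((fun z => z + (k : ℂ)) '' ϖ)) :=
    (Homeomorph.addRight (m : ℂ)).image_interior _
  exact interior_mono hshift (hopen ▸ mem_image_of_mem _ hz)

lemma subset_cellU (hϖ : IsOpen ϖ) : ϖ ⊆ cellU ϖ :=
  interior_maximal (subset_union_right.trans subset_union_left |>.trans subset_closure) hϖ

lemma cellU_subset_piDom : cellU ϖ ⊆ PiDom ϖ := by
  have hmem (k : ℤ) : closure ((fun z => z + (k : ℂ)) '' ϖ) ⊆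
      ⋃ m : ℤ, closure ((fun z => z + (m : ℂ)) '' ϖ) :=
    subset_iUnion (fun m : ℤ => closure ((fun z => z + (m : ℂ)) '' ϖ)) k
  refine interior_mono ?_
  rw [closure_union, closure_union]
  refine union_subset (union_subset ?_ ?_) ?_
  · simpa using hmem (-1)
  · simpa using hmem 0
  · simpa using hmem 1

lemma closure_inter_piDom_subset_cellU (hϖ : ∀ z ∈ ϖ, z.re ∈ Icc (0 : ℝ) 1) :
    closure ϖ ∩ PiDom ϖ ⊆ cellU ϖ := by
  rintro z ⟨hzϖ, hzP⟩
  set V : Set ℂ := Complex.re ⁻¹' Ioo (-1) 2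
  have hV : IsOpen V := isOpen_Ioo.preimage Complex.continuous_re
  have hzV : z ∈ V := by
    have := re_mem_Icc_of_mem_closure_image_add hϖ 0 (by simpa using hzϖ)
    simp only [Int.cast_zero, zero_add, mem_Icc] at this
    exact ⟨by linarith [this.1], by linarith [this.2]⟩
  have hnear : (⋃ k : ℤ, closure ((fun z => z + (k : ℂ)) '' ϖ)) ∩ V ⊆
      closure (((fun z => z + (-1 : ℂ)) '' ϖ) ∪ ϖ ∪ ((fun z => z + (1 : ℂ)) '' ϖ)) := by
    rintro w ⟨hw, hwV⟩
    obtain ⟨_, ⟨k, rfl⟩, hwk⟩ := hw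
    have hre := re_mem_Icc_of_mem_closure_image_add hϖ k hwk
    have hk₁ : (-2 : ℝ) < k := by linarith [hre.2, hwV.1]
    have hk₂ : (k : ℝ) < 2 := by linarith [hre.1, hwV.2]
    obtain ⟨hk₁, hk₂⟩ : -2 < k ∧ k < 2 := ⟨by exact_mod_cast hk₁, by exact_mod_cast hk₂⟩
    interval_cases k
    · exact closure_mono (subset_union_left.trans subset_union_left) (by simpa using hwk)
    · exact closure_mono (subset_union_right.trans subset_union_left) (by simpa using hwk)
    · exact closure_mono subset_union_right (by simpa using hwk)
  have hzint : z ∈ interior ((⋃ k : ℤ, closure ((fun z => z + (k : ℂ)) '' ϖ)) ∩ V) := by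
    rw [interior_inter, hV.interior_eq]
    exact ⟨hzP, hzV⟩
  exact interior_mono hnear hzint

end PeriodicDomain

section Floquet

lemma tendstoUniformlyOn_floquetSum {f : ℂ → ℂ} {K : Set ℂ} {u : ℤ → ℝ} (hu : Summable u)
    (hfu : ∀ m : ℤ, ∀ z ∈ K, ‖f (z + m)‖ ≤ u m) (η : ℝ) :
    TendstoUniformlyOn (fun N z => floquetSum f η N z) (fun z => floquet f z η) atTop K := by
  set c : ℂ := ((√(2 * π) : ℝ) : ℂ)⁻¹
  have hterm : ∀ m : ℤ, ∀ z ∈ K,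
      ‖c * (cexp (-(Complex.I * η * m)) * f (z + m))‖ ≤ ‖c‖ * u m := fun m z hz => by
    rw [norm_mul, norm_mul, show -(Complex.I * η * m) = ((-(η * m) : ℝ) : ℂ) * Complex.I by
      push_cast; ring, Complex.norm_exp_ofReal_mul_I, one_mul]
    exact mul_le_mul_of_nonneg_left (hfu m z hz) (norm_nonneg c)
  have hsum := tendstoUniformlyOn_tsum (hu.mul_left ‖c‖) hterm
  simp only [← Finset.mul_sum, tsum_mul_left] at hsum
  exact fun U hU => Finset.tendsto_Icc_neg.eventually (hsum U hU)

lemma differentiableOn_floquet {f : ℂ → ℂ} {U Ω : Set ℂ} (hU : IsOpen U)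
    (hf : DifferentiableOn ℂ f Ω) (hUΩ : ∀ m : ℤ, ∀ z ∈ U, z + m ∈ Ω) (η : ℝ)
    (hconv : ∀ K ⊆ U, IsCompact K →
      TendstoUniformlyOn (fun N z => floquetSum f η N z) (fun z => floquet f z η) atTop K) :
    DifferentiableOn ℂ (fun z => floquet f z η) U := by
  have hsum (N : ℕ) : DifferentiableOn ℂ (fun z => floquetSum f η N z) U := by
    refine (differentiableOn_const _).mul (DifferentiableOn.fun_sum fun m _ =>
      (differentiableOn_const _).mul ?_)
    exact hf.comp (differentiableOn_id.add_const _) (hUΩ m)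
  exact ((tendstoLocallyUniformlyOn_iff_forall_isCompact hU).2 hconv).differentiableOn
    (.of_forall hsum) hU

end Floquet

lemma exists_forall_norm_add_intCast_le {Ω : Set ℂ} (hΩ : IsOpen Ω)
    (hΩℤ : ∀ m : ℤ, ∀ z ∈ Ω, z + m ∈ Ω) {g : ℂ → ℂ} (hg : g ∈ A2 Ω) {K : Set ℂ}
    (hK : IsCompact K) (hKΩ : K ⊆ Ω) : ∃ B, ∀ z ∈ K, ∀ m : ℤ, ‖g (z + m)‖ ≤ B := by
  obtain ⟨r, hr, hrΩ⟩ := hK.exists_cthickening_subset_open hΩ hKΩ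
  refine ⟨√((π * r ^ 2)⁻¹ * ∫ z in Ω, ‖g z‖ ^ 2), fun z hz m => ?_⟩
  have hball : closedBall (z + m) r ⊆ Ω := fun w hw => by
    have hw' : w - m ∈ closedBall z r := by
      rw [mem_closedBall, dist_eq_norm] at hw ⊢
      convert hw using 2
      ring
    simpa using hΩℤ m _ (hrΩ (closedBall_subset_cthickening hz r hw'))
  refine le_sqrt_of_sq_le ?_
  rw [inv_mul_eq_div, le_div_iff₀ (by positivity), mul_comm]
  exact mul_sq_norm_le_setIntegral_sq_norm hg.1 (hg.2.integrable_norm_pow two_ne_zero) hr.le hball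

section Xspace

variable {ϖ : Set ℂ} {M : ℝ}

lemma Xspace_subset_A2 (hM : ∀ z ∈ PiDom ϖ, |z.im| ≤ M) : Xspace ϖ ⊆ A2 (PiDom ϖ) := by
  rintro _ ⟨ε, hε, g, hg, rfl⟩
  exact gaussian_mul_mem_A2 isOpen_piDom.measurableSet hM hε.le hg

lemma add_mem_Xspace (hM : ∀ z ∈ PiDom ϖ, |z.im| ≤ M) {h₁ h₂ : ℂ → ℂ} (h₁X : h₁ ∈ Xspace ϖ)
    (h₂X : h₂ ∈ Xspace ϖ) : (fun z => h₁ z + h₂ z) ∈ Xspace ϖ := by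
  obtain ⟨ε₁, hε₁, g₁, hg₁, rfl⟩ := h₁X
  obtain ⟨ε₂, hε₂, g₂, hg₂, rfl⟩ := h₂X
  set ε := min ε₁ ε₂
  have hsplit (ε' : ℝ) (z : ℂ) :
      cexp (-(ε' : ℂ) * z ^ 2) = cexp (-(ε : ℂ) * z ^ 2) * cexp (-((ε' - ε : ℝ) : ℂ) * z ^ 2) := by
    rw [← Complex.exp_add]
    push_cast
    ring_nf
  have hPi : MeasurableSet (PiDom ϖ) := isOpen_piDom.measurableSet
  have m₁ := gaussian_mul_mem_A2 hPi hM (sub_nonneg.2 (min_le_left ε₁ ε₂)) hg₁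
  have m₂ := gaussian_mul_mem_A2 hPi hM (sub_nonneg.2 (min_le_right ε₁ ε₂)) hg₂
  refine ⟨ε, lt_min hε₁ hε₂, _, ⟨m₁.1.add m₂.1, m₁.2.add m₂.2⟩, funext fun z => ?_⟩
  simp only [Pi.add_apply]
  rw [hsplit ε₁ z, hsplit ε₂ z]
  ring

lemma const_mul_mem_Xspace (c : ℂ) {h : ℂ → ℂ} (hX : h ∈ Xspace ϖ) :
    (fun z => c * h z) ∈ Xspace ϖ := by
  obtain ⟨ε, hε, g, hg, rfl⟩ := hX
  exact ⟨ε, hε, fun z => c * g z, ⟨(differentiableOn_const c).mul hg.1, hg.2.const_mul c⟩,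
    funext fun z => by ring⟩

lemma exists_mem_Xspace_setIntegral_norm_sub_sq_lt (hM : ∀ z ∈ PiDom ϖ, |z.im| ≤ M)
    {f : ℂ → ℂ} (hf : f ∈ A2 (PiDom ϖ)) {δ : ℝ} (hδ : 0 < δ) :
    ∃ h ∈ Xspace ϖ, ∫ z in PiDom ϖ, ‖f z - h z‖ ^ 2 < δ := by
  obtain ⟨ε, hεδ, hε⟩ := ((tendsto_setIntegral_norm_sub_gaussian_mul_sq
    isOpen_piDom.measurableSet hM hf.2).eventually (gt_mem_nhds hδ)).and
    self_mem_nhdsWithin |>.exists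
  exact ⟨_, ⟨ε, hε, f, hf, rfl⟩, hεδ⟩

lemma exists_summable_bound_of_mem_Xspace (hM : ∀ z ∈ PiDom ϖ, |z.im| ≤ M) {f : ℂ → ℂ}
    (hf : f ∈ Xspace ϖ) {K : Set ℂ} (hK : IsCompact K) (hKPi : K ⊆ PiDom ϖ) :
    ∃ u : ℤ → ℝ, Summable u ∧ ∀ m : ℤ, ∀ z ∈ K, ‖f (z + m)‖ ≤ u m := by
  obtain ⟨ε, hε, g, hg, rfl⟩ := hf
  obtain ⟨B, hB⟩ := exists_forall_norm_add_intCast_le isOpen_piDom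
    (fun m z hz => add_intCast_mem_piDom m hz) hg hK hKPi
  obtain ⟨R, hR⟩ := hK.exists_bound_of_continuousOn Complex.continuous_re.continuousOn
  refine ⟨fun m => rexp (ε * M ^ 2) * rexp (-(ε * m ^ 2 - 2 * ε * R * |(m : ℝ)|)) * B,
    ((summable_exp_neg_mul_sq_sub ε R hε).mul_left _).mul_right _, fun m z hz => ?_⟩
  rw [norm_mul]
  exact mul_le_mul (norm_cexp_neg_ofReal_mul_sq_add_intCast_le hε.le
    (hM _ (add_intCast_mem_piDom m (hKPi hz))) (hR z hz)) (hB z hz m) (norm_nonneg _)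
    (by positivity)

end Xspace

theorem statement4_general (M a b : ℝ)
    (ϖ : Set ℂ) (hϖ : cellOK ϖ M a b) :
    -- X is a subspace of A²(Π) ...
    (Xspace ϖ ⊆ A2 (PiDom ϖ)) ∧
    (∀ h₁ ∈ Xspace ϖ, ∀ h₂ ∈ Xspace ϖ, (fun z => h₁ z + h₂ z) ∈ Xspace ϖ) ∧
    (∀ c : ℂ, ∀ h ∈ Xspace ϖ, (fun z => c * h z) ∈ Xspace ϖ) ∧
    -- ... which is dense,
    (∀ f ∈ A2 (PiDom ϖ), ∀ δ > (0:ℝ), ∃ h ∈ Xspace ϖ,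
      (∫ z in PiDom ϖ, ‖f z - h z‖ ^ 2) < δ) ∧
    -- ϖ_U is an open neighborhood in Π of cl(ϖ) ∩ Π containing ϖ,
    (ϖ ⊆ cellU ϖ ∧ cellU ϖ ⊆ PiDom ϖ ∧ closure ϖ ∩ PiDom ϖ ⊆ cellU ϖ) ∧
    -- and for f ∈ X the Floquet series converges uniformly on compacts of ϖ_U,
    -- with analytic sum there.
    ∀ f ∈ Xspace ϖ, ∀ η ∈ Icc (-Real.pi) Real.pi,
      (∀ K : Set ℂ, K ⊆ cellU ϖ → IsCompact K →
        TendstoUniformlyOn (fun N z => floquetSum f η N z)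
          (fun z => floquet f z η) atTop K) ∧
      DifferentiableOn ℂ (fun z => floquet f z η) (cellU ϖ) := by
  obtain ⟨hopen, -, hbox, -, -⟩ := hϖ
  have hM : ∀ z ∈ PiDom ϖ, |z.im| ≤ M := fun z => abs_im_le_of_mem_piDom fun w hw =>
    abs_le.2 ⟨(hbox hw).2.2.1.le, (hbox hw).2.2.2.le⟩
  have hconv (f : ℂ → ℂ) (hf : f ∈ Xspace ϖ) (η : ℝ) (K : Set ℂ) (hKU : K ⊆ cellU ϖ)
      (hK : IsCompact K) :
      TendstoUniformlyOn (fun N z => floquetSum f η N z) (fun z => floquet f z η) atTop K :=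
    have ⟨_, hu, hfu⟩ :=
      exists_summable_bound_of_mem_Xspace hM hf hK (hKU.trans cellU_subset_piDom)
    tendstoUniformlyOn_floquetSum hu hfu η
  refine ⟨Xspace_subset_A2 hM, fun _ h₁ _ h₂ => add_mem_Xspace hM h₁ h₂,
    fun c _ h => const_mul_mem_Xspace c h, fun f hf δ hδ =>
    exists_mem_Xspace_setIntegral_norm_sub_sq_lt hM hf hδ,
    ⟨subset_cellU hopen, cellU_subset_piDom, closure_inter_piDom_subset_cellU fun z hz =>
      ⟨(hbox hz).1.le, (hbox hz).2.1.le⟩⟩, fun f hf η _ => ⟨hconv f hf η, ?_⟩⟩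
  exact differentiableOn_floquet isOpen_interior (Xspace_subset_A2 hM hf).1
    (fun m z hz => add_intCast_mem_piDom m (cellU_subset_piDom hz)) η (hconv f hf η)

/-- `X` is a dense subspace of `A²(Π)`, and for every `f ∈ X` and every
`η ∈ [−π,π]` the Floquet series converges uniformly on compact subsets of `ϖ_U`, so that
`F f(·,η)` is analytic on `ϖ` and extends analytically to a neighborhood in `Π` of
`cl(ϖ) ∩ Π` (namely `ϖ_U`). -/
theorem statement4 (M a b : ℝ) (hM : 0 < M) (hab : a < b)
    (ϖ : Set ℂ) (hϖ : cellOK ϖ M a b) :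
    -- X is a subspace of A²(Π) ...
    (Xspace ϖ ⊆ A2 (PiDom ϖ)) ∧
    (∀ h₁ ∈ Xspace ϖ, ∀ h₂ ∈ Xspace ϖ, (fun z => h₁ z + h₂ z) ∈ Xspace ϖ) ∧
    (∀ c : ℂ, ∀ h ∈ Xspace ϖ, (fun z => c * h z) ∈ Xspace ϖ) ∧
    -- ... which is dense,
    (∀ f ∈ A2 (PiDom ϖ), ∀ δ > (0:ℝ), ∃ h ∈ Xspace ϖ,
      (∫ z in PiDom ϖ, ‖f z - h z‖ ^ 2) < δ) ∧
    -- ϖ_U is an open neighborhood in Π of cl(ϖ) ∩ Π containing ϖ,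
    (ϖ ⊆ cellU ϖ ∧ cellU ϖ ⊆ PiDom ϖ ∧ closure ϖ ∩ PiDom ϖ ⊆ cellU ϖ) ∧
    -- and for f ∈ X the Floquet series converges uniformly on compacts of ϖ_U,
    -- with analytic sum there.
    ∀ f ∈ Xspace ϖ, ∀ η ∈ Icc (-Real.pi) Real.pi,
      (∀ K : Set ℂ, K ⊆ cellU ϖ → IsCompact K →
        TendstoUniformlyOn (fun N z => floquetSum f η N z)
          (fun z => floquet f z η) atTop K) ∧
      DifferentiableOn ℂ (fun z => floquet f z η) (cellU ϖ) :=
  statement4_general M a b ϖ hϖ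
end
end

section
/- Let Π = ℝ × (1/4, 1/2) ⊂ ℂ. Then the function f(z) = 1/z is analytic on Π and square-integrable over Π (so f ∈ A²(Π)), yet for every z ∈ (0,1)×(1/4,1/2) the family (1/(z+m))_{m∈ℤ} is not summable; that is, the Floquet series Σ_{m∈ℤ} e^{−iηm} f(z+m) at η = 0 does not converge unconditionally. -/
open Complex MeasureTheory Set Filter Topology

noncomputable section

/-- The strip `Π = ℝ × (1/4, 1/2)`. -/
def PiStrip : Set ℂ := {z : ℂ | 1/4 < z.im ∧ z.im < 1/2}

/-! On the strip `1/4 < im z < 1/2` we have `‖z⁻¹‖² ≤ (re z² + 1/16)⁻¹`, a function of `re z` alone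
that is integrable on `ℝ`, and the strip has finite width. On the other hand `‖z + n‖ ≤ 2n` for
large `n`, so the norms of the Floquet terms dominate half the harmonic series. -/

theorem integrable_inv_sq_add_sq {c : ℝ} (hc : c ≠ 0) :
    Integrable fun x : ℝ => (x ^ 2 + c ^ 2)⁻¹ := by
  refine ((integrable_inv_one_add_sq.comp_div hc).const_mul (c ^ 2)⁻¹).congr
    (Eventually.of_forall fun x => ?_)
  simp only
  field_simp
  ring

theorem Complex.integrableOn_comp_re_im_preimage {E : Type*} [NormedAddCommGroup E]
    {g : ℝ → E} (hg : Integrable g) {t : Set ℝ} (ht : volume t ≠ ⊤) :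
    IntegrableOn (fun z : ℂ => g z.re) (im ⁻¹' t) := by
  have : IsFiniteMeasure (volume.restrict t) := ⟨by simpa using ht.lt_top⟩
  have hprod := hg.comp_fst (volume.restrict t)
  have hrestrict := Measure.prod_restrict (μ := (volume : Measure ℝ)) (ν := volume) univ t
  rw [Measure.restrict_univ, ← Measure.volume_eq_prod] at hrestrict
  rw [hrestrict] at hprod
  rw [← (volume_preserving_equiv_real_prod.symm measurableEquivRealProd).integrableOn_comp_preimage
    measurableEquivRealProd.symm.measurableEmbedding]
  have hpre : measurableEquivRealProd.symm ⁻¹' (im ⁻¹' t) = univ ×ˢ t := by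
    ext p
    simp [measurableEquivRealProd]
  rw [hpre]
  exact hprod

theorem Complex.memLp_two_inv_restrict_im_preimage {c : ℝ} (hc : 0 < c) {t : Set ℝ}
    (ht : MeasurableSet t) (ht_fin : volume t ≠ ⊤) (htc : ∀ y ∈ t, c ≤ |y|) :
    MemLp (fun z : ℂ => z⁻¹) 2 (volume.restrict (im ⁻¹' t)) := by
  have hmeas : AEStronglyMeasurable (fun z : ℂ => z⁻¹) (volume.restrict (im ⁻¹' t)) :=
    measurable_inv.aestronglyMeasurable
  rw [memLp_two_iff_integrable_sq_norm hmeas]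
  refine (integrableOn_comp_re_im_preimage (integrable_inv_sq_add_sq hc.ne') ht_fin).mono'
    (hmeas.norm.pow 2) ?_
  rw [ae_restrict_iff' (measurable_im ht)]
  refine Eventually.of_forall fun z hz => ?_
  have hcy : c ^ 2 ≤ z.im ^ 2 := by
    simpa [sq_abs] using pow_le_pow_left₀ hc.le (htc _ hz) 2
  rw [norm_pow, norm_norm, norm_inv, inv_pow, Complex.sq_norm, normSq_apply]
  exact inv_anti₀ (by positivity) (by nlinarith)

theorem Complex.not_summable_inv_add_intCast (z : ℂ) :
    ¬ Summable fun m : ℤ => (z + m)⁻¹ := by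
  intro h
  have hnat : Summable fun n : ℕ => ‖(z + n)⁻¹‖ :=
    (h.comp_injective Nat.cast_injective).norm
  refine Real.not_summable_natCast_inv <| (hnat.mul_left 2).of_norm_bounded_eventually ?_
  rw [Nat.cofinite_eq_atTop]
  filter_upwards [eventually_gt_atTop ⌈‖z‖⌉₊] with n hn
  have hzn : ‖z‖ < n := Nat.lt_of_ceil_lt hn
  have hlow : n - ‖z‖ ≤ ‖z + n‖ := by
    simpa [add_comm] using norm_sub_norm_le (n : ℂ) (-z)
  have hup : ‖z + n‖ ≤ 2 * n := by
    linarith [norm_add_le z n, show ‖(n : ℂ)‖ = n from by simp]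
  rw [norm_inv, Real.norm_natCast, norm_inv]
  calc (n : ℝ)⁻¹ = 2 * (2 * (n : ℝ))⁻¹ := by field_simp
    _ ≤ 2 * ‖z + n‖⁻¹ := by gcongr; linarith

/-- On `Π = ℝ × (1/4,1/2)`, the function `f(z) = 1/z` belongs to
`A²(Π)`, yet for every `z ∈ (0,1)×(1/4,1/2)` the family `(1/(z+m))_{m∈ℤ}` is not
summable, i.e. the Floquet series at `η = 0` does not converge unconditionally. -/
theorem statement5 :
    (fun z : ℂ => z⁻¹) ∈ A2 PiStrip ∧
    ∀ z : ℂ, 0 < z.re → z.re < 1 → 1/4 < z.im → z.im < 1/2 →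
      ¬ Summable (fun m : ℤ => (z + (m : ℂ))⁻¹) := by
  have hPi : PiStrip = im ⁻¹' Ioo (1/4) (1/2) := rfl
  have hzero : (0 : ℂ) ∉ PiStrip := by norm_num [PiStrip]
  refine ⟨⟨differentiableOn_inv.mono fun z hz => ?_, ?_⟩,
    fun z _ _ _ _ => not_summable_inv_add_intCast z⟩
  · exact ne_of_mem_of_not_mem hz hzero
  · rw [hPi]
    refine memLp_two_inv_restrict_im_preimage (c := 1/4) (by norm_num) measurableSet_Ioo
      measure_Ioo_lt_top.ne fun y hy => ?_
    exact hy.1.le.trans (le_abs_self y)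

end
end

section
/- The subspace ℋ_η = { g ∈ L²((−π,π)×ϖ) : g(·,η) ∈ A²_{η,ext}(ϖ) for a.e. η ∈ [−π,π] } is dense in L²(−π,π; A²_η(ϖ)) = { g ∈ L²((−π,π)×ϖ) : g(·,η) ∈ A²_η(ϖ) for a.e. η ∈ [−π,π] }. -/
/-!
Multiplying the fibre `g(η, ·)` by `e^{-iηz}` carries `A²_η(ϖ)` into the single space `A²_0(ϖ)`
(the twist is bounded by `e^{πM}` on `ϖ` and preserves analyticity and the extension), so it
suffices to approximate a function `G` whose fibres lie a.e. in the `L²(ϖ)`-closure of the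
subspace `𝒮 = A²_{0,ext}(ϖ)` by functions whose fibres all lie in `𝒮`. Such a `G` lies in the
closed span of the products `1_E(η) s(z)`, `s ∈ 𝒮`: if `w` is orthogonal to all of them, then for
a.e. `η` the fibre `w(η, ·)` is orthogonal to every `s` of a countable `L²`-dense subset of `𝒮`
(`L²(ϖ)` is separable), hence to `G(η, ·)`, and Fubini gives `⟪w, G⟫ = 0`. Every element of the
algebraic span has all its fibres in `𝒮`, and twisting back by `e^{iηz}` lands in `ℋ_η`.
-/

open Complex MeasureTheory Set Filter Topology

noncomputable section

/-- The subspace `ℋ_η ⊆ L²((−π,π)×ϖ)` of functions with `g(·,η) ∈ A²_{η,ext}(ϖ)`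
for a.e. `η`. -/
def HEta (ϖ Pid : Set ℂ) (a b : ℝ) : Set (ℝ × ℂ → ℂ) :=
  {g | MemLp g 2 (volume.restrict ((Ioo (-Real.pi) Real.pi) ×ˢ ϖ)) ∧
    ∀ᵐ η ∂(volume.restrict (Icc (-Real.pi) Real.pi)),
      (fun z => g (η, z)) ∈ A2ext ϖ Pid a b η}

/-- The subspace `L²(−π,π; A²_η(ϖ)) ⊆ L²((−π,π)×ϖ)` of functions with
`g(·,η) ∈ A²_η(ϖ)` for a.e. `η`. -/
def L2AEta (ϖ Pid : Set ℂ) (a b : ℝ) : Set (ℝ × ℂ → ℂ) :=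
  {g | MemLp g 2 (volume.restrict ((Ioo (-Real.pi) Real.pi) ×ˢ ϖ)) ∧
    ∀ᵐ η ∂(volume.restrict (Icc (-Real.pi) Real.pi)),
      (fun z => g (η, z)) ∈ A2eta ϖ Pid a b η}

open scoped InnerProductSpace ComplexConjugate

namespace MeasureTheory

variable {𝕜 α β : Type*} [RCLike 𝕜] [MeasurableSpace α] [MeasurableSpace β]
  {ν : Measure α} {μ : Measure β}

lemma L2.inner_eq_integral_of_ae_eq {m : Measure α} {u w : Lp 𝕜 2 m} {f g : α → 𝕜}
    (hu : u =ᵐ[m] f) (hw : w =ᵐ[m] g) : ⟪u, w⟫_𝕜 = ∫ x, conj (f x) * g x ∂m := by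
  rw [L2.inner_def]
  refine integral_congr_ae ?_
  filter_upwards [hu, hw] with x hux hwx
  rw [hux, hwx, RCLike.inner_apply']

lemma MemLp.dist_toLp_sq {m : Measure α} {u v : α → 𝕜} (hu : MemLp u 2 m) (hv : MemLp v 2 m) :
    dist (hu.toLp u) (hv.toLp v) ^ 2 = ∫ x, ‖u x - v x‖ ^ 2 ∂m := by
  have huv := (hu.sub hv).coeFn_toLp
  rw [dist_eq_norm, ← MemLp.toLp_sub, ← inner_self_eq_norm_sq (𝕜 := 𝕜),
    L2.inner_eq_integral_of_ae_eq huv huv]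
  simp_rw [Pi.sub_apply, RCLike.conj_mul]
  norm_cast

lemma MemLp.ae_memLp_slice [SFinite ν] [SFinite μ] {F : α × β → 𝕜} (hF : MemLp F 2 (ν.prod μ)) :
    ∀ᵐ η ∂ν, MemLp (fun z => F (η, z)) 2 μ := by
  have hint := (memLp_two_iff_integrable_sq_norm hF.1).1 hF
  filter_upwards [hF.1.prodMk_left, hint.prod_right_ae] with η hmeas hη
  exact (memLp_two_iff_integrable_sq_norm hmeas).2 hη

def indicatorTensors (ν : Measure α) (μ : Measure β) (𝒮 : Set (β → 𝕜)) :
    Set (Lp 𝕜 2 (ν.prod μ)) :=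
  {u | ∃ E, MeasurableSet E ∧ ∃ s ∈ 𝒮, u =ᵐ[ν.prod μ] (E ×ˢ univ).indicator (fun p => s p.2)}

lemma ae_integral_conj_mul_slice_eq_zero [IsFiniteMeasure ν] [SFinite μ] {𝒮 : Set (β → 𝕜)}
    {w : Lp 𝕜 2 (ν.prod μ)} (hw : ∀ u ∈ indicatorTensors ν μ 𝒮, ⟪u, w⟫_𝕜 = 0)
    {s : β → 𝕜} (hs𝒮 : s ∈ 𝒮) (hs : MemLp s 2 μ) :
    ∀ᵐ η ∂ν, ∫ z, conj (s z) * w (η, z) ∂μ = 0 := by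
  have hs' := hs.comp_snd ν
  have hint : Integrable (fun p => conj (s p.2) * w p) (ν.prod μ) := by
    refine (L2.integrable_inner (𝕜 := 𝕜) (hs'.toLp _) w).congr ?_
    filter_upwards [hs'.coeFn_toLp] with p hp
    rw [RCLike.inner_apply', hp]
  refine hint.integral_prod_left.ae_eq_zero_of_forall_setIntegral_eq_zero fun E hE _ => ?_
  have hE' : MeasurableSet (E ×ˢ (univ : Set β)) := hE.prod MeasurableSet.univ
  have hgen := (hs'.indicator hE').coeFn_toLp
  calc ∫ η in E, ∫ z, conj (s z) * w (η, z) ∂μ ∂ν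
      = ∫ p in E ×ˢ univ, conj (s p.2) * w p ∂(ν.prod μ) := by
        rw [setIntegral_prod _ hint.integrableOn, Measure.restrict_univ]
    _ = ⟪(hs'.indicator hE').toLp _, w⟫_𝕜 := by
        rw [L2.inner_eq_integral_of_ae_eq hgen EventuallyEq.rfl, ← integral_indicator hE']
        congr 1 with p
        by_cases hp : p ∈ E ×ˢ univ <;> simp [hp]
    _ = 0 := hw _ ⟨E, hE, s, hs𝒮, hgen⟩

lemma MemLp.toLp_mem_closure {m : Measure α} {𝒮 : Set (α → 𝕜)} (h𝒮 : ∀ s ∈ 𝒮, MemLp s 2 m)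
    {f : α → 𝕜} (hf : MemLp f 2 m) (happrox : ∀ ε > 0, ∃ s ∈ 𝒮, ∫ x, ‖f x - s x‖ ^ 2 ∂m < ε) :
    hf.toLp f ∈ closure {u : Lp 𝕜 2 m | ∃ s ∈ 𝒮, u =ᵐ[m] s} := by
  refine Metric.mem_closure_iff.2 fun r hr => ?_
  obtain ⟨s, hs, hfs⟩ := happrox (r ^ 2) (by positivity)
  refine ⟨(h𝒮 s hs).toLp s, ⟨s, hs, (h𝒮 s hs).coeFn_toLp⟩, ?_⟩
  rw [← hf.dist_toLp_sq (h𝒮 s hs)] at hfs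
  exact lt_of_pow_lt_pow_left₀ 2 hr.le hfs

theorem toLp_mem_topologicalClosure_span_indicatorTensors [IsFiniteMeasure ν] [SFinite μ]
    [TopologicalSpace.SeparableSpace (Lp 𝕜 2 μ)] {𝒮 : Set (β → 𝕜)} (h𝒮 : ∀ s ∈ 𝒮, MemLp s 2 μ)
    {F : α × β → 𝕜} (hF : MemLp F 2 (ν.prod μ))
    (hslice : ∀ᵐ η ∂ν, ∀ ε > 0, ∃ s ∈ 𝒮, ∫ z, ‖F (η, z) - s z‖ ^ 2 ∂μ < ε) :
    hF.toLp F ∈ (Submodule.span 𝕜 (indicatorTensors ν μ 𝒮)).topologicalClosure := by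
  rw [← Submodule.orthogonal_orthogonal_eq_closure, Submodule.mem_orthogonal']
  intro w hw
  have hw' : ∀ u ∈ indicatorTensors ν μ 𝒮, ⟪u, w⟫_𝕜 = 0 := fun u hu =>
    (Submodule.mem_orthogonal _ w).1 hw u (Submodule.subset_span hu)
  obtain ⟨D, hDS, hDc, hSD⟩ := (TopologicalSpace.IsSeparable.of_separableSpace
    {u : Lp 𝕜 2 μ | ∃ s ∈ 𝒮, u =ᵐ[μ] s}).exists_countable_dense_subset
  have hD : ∀ᵐ η ∂ν, ∀ d ∈ D, ∫ z, conj (d z) * w (η, z) ∂μ = 0 := by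
    refine (ae_ball_iff hDc).2 fun d hd => ?_
    obtain ⟨s, hs, hds⟩ := hDS hd
    filter_upwards [ae_integral_conj_mul_slice_eq_zero hw' hs (h𝒮 s hs)] with η hη
    rw [← hη]
    exact integral_congr_ae (hds.mono fun z hz => by simp only [hz])
  have hfiber : ∀ᵐ η ∂ν, ∫ z, conj (F (η, z)) * w (η, z) ∂μ = 0 := by
    filter_upwards [hD, hF.ae_memLp_slice, (Lp.memLp w).ae_memLp_slice, hslice]
      with η hηD hFη hwη hη
    have hclosure : hFη.toLp _ ∈ closure D :=
      closure_minimal hSD isClosed_closure (hFη.toLp_mem_closure h𝒮 hη)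
    have hzero : ∀ x ∈ closure D, ⟪x, hwη.toLp _⟫_𝕜 = 0 := by
      refine closure_minimal (fun d hd => ?_) (isClosed_eq (by fun_prop) continuous_const)
      show ⟪d, _⟫_𝕜 = 0
      rw [L2.inner_eq_integral_of_ae_eq EventuallyEq.rfl hwη.coeFn_toLp]
      exact hηD d hd
    rw [← hzero _ hclosure, L2.inner_eq_integral_of_ae_eq hFη.coeFn_toLp hwη.coeFn_toLp]
  have hint : Integrable (fun p => conj (F p) * w p) (ν.prod μ) := by
    refine (L2.integrable_inner (𝕜 := 𝕜) (hF.toLp F) w).congr ?_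
    filter_upwards [hF.coeFn_toLp] with p hp
    rw [RCLike.inner_apply', hp]
  rw [L2.inner_eq_integral_of_ae_eq hF.coeFn_toLp EventuallyEq.rfl, integral_prod _ hint,
    integral_congr_ae hfiber, integral_zero]

lemma exists_ae_eq_forall_slice_mem_of_mem_span (𝒮 : Submodule 𝕜 (β → 𝕜))
    {u : Lp 𝕜 2 (ν.prod μ)} (hu : u ∈ Submodule.span 𝕜 (indicatorTensors ν μ (𝒮 : Set (β → 𝕜)))) :
    ∃ H : α × β → 𝕜, u =ᵐ[ν.prod μ] H ∧ ∀ η, (fun z => H (η, z)) ∈ 𝒮 := by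
  induction hu using Submodule.span_induction with
  | mem u hu =>
    obtain ⟨E, -, s, hs, hu⟩ := hu
    refine ⟨_, hu, fun η => ?_⟩
    by_cases hη : η ∈ E
    · simpa [hη] using hs
    · simp only [hη, mem_prod, false_and, not_false_eq_true, indicator_of_notMem]
      exact 𝒮.zero_mem
  | zero => exact ⟨0, Lp.coeFn_zero .., fun η => 𝒮.zero_mem⟩
  | add u v _ _ hu hv =>
    obtain ⟨H₁, h₁, hH₁⟩ := hu
    obtain ⟨H₂, h₂, hH₂⟩ := hv
    exact ⟨H₁ + H₂, (Lp.coeFn_add u v).trans (h₁.add h₂), fun η => 𝒮.add_mem (hH₁ η) (hH₂ η)⟩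
  | smul c u _ hu =>
    obtain ⟨H, h, hH⟩ := hu
    exact ⟨c • H, (Lp.coeFn_smul c u).trans (h.const_smul c), fun η => 𝒮.smul_mem c (hH η)⟩

theorem exists_memLp_forall_slice_mem_integral_norm_sub_sq_lt [IsFiniteMeasure ν] [SFinite μ]
    [TopologicalSpace.SeparableSpace (Lp 𝕜 2 μ)] (𝒮 : Submodule 𝕜 (β → 𝕜))
    (h𝒮 : ∀ s ∈ 𝒮, MemLp s 2 μ) {F : α × β → 𝕜} (hF : MemLp F 2 (ν.prod μ))
    (hslice : ∀ᵐ η ∂ν, ∀ ε > 0, ∃ s ∈ 𝒮, ∫ z, ‖F (η, z) - s z‖ ^ 2 ∂μ < ε)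
    {ε : ℝ} (hε : 0 < ε) :
    ∃ H : α × β → 𝕜, MemLp H 2 (ν.prod μ) ∧ (∀ η, (fun z => H (η, z)) ∈ 𝒮) ∧
      ∫ p, ‖F p - H p‖ ^ 2 ∂(ν.prod μ) < ε := by
  have hcl := toLp_mem_topologicalClosure_span_indicatorTensors h𝒮 hF hslice
  rw [← SetLike.mem_coe, Submodule.topologicalClosure_coe, Metric.mem_closure_iff] at hcl
  obtain ⟨u, hu, hFu⟩ := hcl √ε (Real.sqrt_pos.2 hε)
  obtain ⟨H, huH, hH⟩ := exists_ae_eq_forall_slice_mem_of_mem_span 𝒮 hu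
  have hHLp : MemLp H 2 (ν.prod μ) := (Lp.memLp u).ae_eq huH
  refine ⟨H, hHLp, hH, ?_⟩
  have hu_eq : u = hHLp.toLp H := (Lp.toLp_coeFn u (Lp.memLp u)).symm.trans (MemLp.toLp_congr _ _ huH)
  rw [← hF.dist_toLp_sq hHLp, ← hu_eq]
  exact (Real.lt_sqrt dist_nonneg).1 hFu

lemma integral_norm_mul_sq_le {m : Measure α}
    {c u : α → 𝕜} {C : ℝ} (hu : MemLp u 2 m) (hc : ∀ᵐ x ∂m, ‖c x‖ ≤ C) :
    ∫ x, ‖c x * u x‖ ^ 2 ∂m ≤ C ^ 2 * ∫ x, ‖u x‖ ^ 2 ∂m := by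
  rw [← integral_const_mul]
  refine integral_mono_of_nonneg (ae_of_all _ fun x => by positivity)
    (((memLp_two_iff_integrable_sq_norm hu.1).1 hu).const_mul _) ?_
  filter_upwards [hc] with x hx
  rw [norm_mul, mul_pow]
  gcongr

end MeasureTheory

lemma norm_cexp_ofReal_mul_I_mul_le {θ T M : ℝ} {z : ℂ} (hθ : |θ| ≤ T) (hz : |z.im| ≤ M) :
    ‖cexp (θ * I * z)‖ ≤ Real.exp (T * M) := by
  rw [norm_exp, Real.exp_le_exp]
  have hre : (θ * I * z).re = -(θ * z.im) := by simp
  calc (θ * I * z).re ≤ |θ| * |z.im| := by rw [hre, ← abs_mul]; exact neg_le_abs _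
    _ ≤ T * M := mul_le_mul hθ hz (abs_nonneg _) ((abs_nonneg _).trans hθ)

lemma cellOK.abs_im_le {ϖ : Set ℂ} {M a b : ℝ} (hϖ : cellOK ϖ M a b) {z : ℂ} (hz : z ∈ ϖ) :
    |z.im| ≤ M :=
  abs_le.2 ⟨(hϖ.2.2.1 hz).2.2.1.le, (hϖ.2.2.1 hz).2.2.2.le⟩

lemma cellOK.isFiniteMeasure_restrict {ϖ : Set ℂ} {M a b : ℝ} (hϖ : cellOK ϖ M a b) :
    IsFiniteMeasure (volume.restrict ϖ) := by
  have hsub : ϖ ⊆ Icc 0 1 ×ℂ Icc (-M) M := fun z hz =>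
    let h := hϖ.2.2.1 hz
    ⟨⟨h.1.le, h.2.1.le⟩, ⟨h.2.2.1.le, h.2.2.2.le⟩⟩
  exact MeasureTheory.isFiniteMeasure_restrict.2
    ((measure_mono hsub).trans_lt (isCompact_Icc.reProdIm isCompact_Icc).measure_lt_top).ne

section Twist

variable {ϖ Pid : Set ℂ} {a b M η : ℝ}

lemma ae_restrict_norm_cexp_le (hϖ : MeasurableSet ϖ) (hM : ∀ z ∈ ϖ, |z.im| ≤ M) (θ : ℝ) :
    ∀ᵐ z ∂volume.restrict ϖ, ‖cexp (θ * I * z)‖ ≤ Real.exp (|θ| * M) :=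
  (ae_restrict_iff' hϖ).2 (ae_of_all _ fun z hz => norm_cexp_ofReal_mul_I_mul_le le_rfl (hM z hz))

lemma A2_twist (hϖ : MeasurableSet ϖ) (hM : ∀ z ∈ ϖ, |z.im| ≤ M) (θ : ℝ) {f : ℂ → ℂ}
    (hf : f ∈ A2 ϖ) : (fun z => cexp (θ * I * z) * f z) ∈ A2 ϖ :=
  ⟨(by fun_prop : Differentiable ℂ fun z => cexp (θ * I * z)).differentiableOn.mul hf.1,
    hf.2.mul' (memLp_top_of_bound (by fun_prop : Continuous _).aestronglyMeasurable _
      (ae_restrict_norm_cexp_le hϖ hM θ))⟩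

lemma A2ext_twist (hϖ : MeasurableSet ϖ) (hM : ∀ z ∈ ϖ, |z.im| ≤ M) (θ : ℝ) {f : ℂ → ℂ}
    (hf : f ∈ A2ext ϖ Pid a b η) :
    (fun z => cexp (θ * I * z) * f z) ∈ A2ext ϖ Pid a b (η + θ) := by
  obtain ⟨hfA2, U, F, hU, hUPid, hϖU, hF, hfF, hFper⟩ := hf
  refine ⟨A2_twist hϖ hM θ hfA2, U, fun z => cexp (θ * I * z) * F z, hU, hUPid, hϖU,
    (by fun_prop : Differentiable ℂ fun z => cexp (θ * I * z)).differentiableOn.mul hF,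
    fun z hz => by simp only [hfF hz], fun y hy₁ hy₂ => ?_⟩
  simp only [hFper y hy₁ hy₂, ← mul_assoc, ← Complex.exp_add]
  congr 2
  push_cast
  ring

lemma A2eta_twist (hϖ : MeasurableSet ϖ) (hM : ∀ z ∈ ϖ, |z.im| ≤ M) (θ : ℝ) {f : ℂ → ℂ}
    (hf : f ∈ A2eta ϖ Pid a b η) :
    (fun z => cexp (θ * I * z) * f z) ∈ A2eta ϖ Pid a b (η + θ) := by
  refine ⟨A2_twist hϖ hM θ hf.1, fun ε hε => ?_⟩
  set C := Real.exp (|θ| * M)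
  have hC : 0 < C := Real.exp_pos _
  obtain ⟨g, hg, hfg⟩ := hf.2 (ε / C ^ 2) (by positivity)
  refine ⟨_, A2ext_twist hϖ hM θ hg, ?_⟩
  calc ∫ z in ϖ, ‖cexp (θ * I * z) * f z - cexp (θ * I * z) * g z‖ ^ 2
      = ∫ z in ϖ, ‖cexp (θ * I * z) * (f z - g z)‖ ^ 2 := by simp only [mul_sub]
    _ ≤ C ^ 2 * ∫ z in ϖ, ‖f z - g z‖ ^ 2 :=
        integral_norm_mul_sq_le (hf.1.2.sub hg.1.2) (ae_restrict_norm_cexp_le hϖ hM θ)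
    _ < C ^ 2 * (ε / C ^ 2) := by gcongr
    _ = ε := by field_simp

end Twist

def A2extSubmodule (ϖ : Set ℂ) (a b η : ℝ) : Submodule ℂ (ℂ → ℂ) where
  carrier := A2ext ϖ (PiDom ϖ) a b η
  add_mem' := by
    rintro f g ⟨⟨hfd, hfL⟩, U₁, F₁, hU₁, hU₁Pi, hϖU₁, hF₁, hfF₁, hF₁per⟩
      ⟨⟨hgd, hgL⟩, U₂, F₂, hU₂, hU₂Pi, hϖU₂, hF₂, hgF₂, hF₂per⟩
    refine ⟨⟨hfd.add hgd, hfL.add hgL⟩, U₁ ∩ U₂, F₁ + F₂, hU₁.inter hU₂,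
      inter_subset_left.trans hU₁Pi, subset_inter hϖU₁ hϖU₂,
      (hF₁.mono inter_subset_left).add (hF₂.mono inter_subset_right),
      fun z hz => by simp [hfF₁ hz, hgF₂ hz], fun y hy₁ hy₂ => ?_⟩
    simp [hF₁per y hy₁ hy₂, hF₂per y hy₁ hy₂, mul_add]
  zero_mem' := ⟨⟨differentiableOn_const 0, MemLp.zero⟩, PiDom ϖ, 0, isOpen_interior, subset_rfl,
    inter_subset_right, differentiableOn_const 0, fun _ _ => rfl, fun _ _ _ => by simp⟩
  smul_mem' := by
    rintro c f ⟨⟨hfd, hfL⟩, U, F, hU, hUPi, hϖU, hF, hfF, hFper⟩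
    refine ⟨⟨hfd.const_smul c, hfL.const_smul c⟩, U, c • F, hU, hUPi, hϖU, hF.const_smul c,
      fun z hz => by simp [hfF hz], fun y hy₁ hy₂ => ?_⟩
    simp only [Pi.smul_apply, smul_eq_mul, hFper y hy₁ hy₂]
    ring

lemma HEta_subset_L2AEta (ϖ Pid : Set ℂ) (a b : ℝ) : HEta ϖ Pid a b ⊆ L2AEta ϖ Pid a b :=
  fun _ hg => ⟨hg.1, hg.2.mono fun _ hη => ⟨hη.1, fun _ hε => ⟨_, hη, by simpa⟩⟩⟩

lemma cellOK.ae_norm_cexp_le {ϖ : Set ℂ} {M a b : ℝ} (hϖ : cellOK ϖ M a b) :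
    ∀ᵐ p ∂(volume.restrict (Ioo (-Real.pi) Real.pi)).prod (volume.restrict ϖ),
      ∀ θ : ℝ, |θ| = |p.1| → ‖cexp (θ * I * p.2)‖ ≤ Real.exp (Real.pi * M) := by
  rw [Measure.prod_restrict]
  filter_upwards [ae_restrict_mem (measurableSet_Ioo.prod hϖ.1.measurableSet)] with p hp θ hθ
  exact norm_cexp_ofReal_mul_I_mul_le (hθ ▸ (abs_lt.2 hp.1).le) (hϖ.abs_im_le hp.2)

theorem statement6_general (M a b : ℝ)
    (ϖ : Set ℂ) (hϖ : cellOK ϖ M a b) :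
    HEta ϖ (PiDom ϖ) a b ⊆ L2AEta ϖ (PiDom ϖ) a b ∧
    ∀ g ∈ L2AEta ϖ (PiDom ϖ) a b, ∀ ε > (0:ℝ), ∃ h ∈ HEta ϖ (PiDom ϖ) a b,
      (∫ p in (Ioo (-Real.pi) Real.pi) ×ˢ ϖ, ‖g p - h p‖ ^ 2) < ε := by
  refine ⟨HEta_subset_L2AEta _ _ _ _, ?_⟩
  rintro g ⟨hg, hgη⟩ ε hε
  have hϖm : MeasurableSet ϖ := hϖ.1.measurableSet
  have := hϖ.isFiniteMeasure_restrict
  -- with this instance `Lp.SecondCountableTopology` makes `Lp ℂ 2 (volume.restrict ϖ)` separable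
  have : Fact ((2 : ENNReal) ≠ ⊤) := ⟨ENNReal.ofNat_ne_top⟩
  set ν := volume.restrict (Ioo (-Real.pi) Real.pi)
  have hprod : volume.restrict (Ioo (-Real.pi) Real.pi ×ˢ ϖ) = ν.prod (volume.restrict ϖ) :=
    (Measure.prod_restrict _ _).symm
  set C := Real.exp (Real.pi * M)
  have hC : 0 < C := Real.exp_pos _
  have hbound : ∀ᵐ p ∂ν.prod (volume.restrict ϖ), ‖cexp (p.1 * I * p.2)‖ ≤ C :=
    hϖ.ae_norm_cexp_le.mono fun p hp => hp p.1 rfl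
  have hbound_neg : ∀ᵐ p ∂ν.prod (volume.restrict ϖ), ‖cexp (((-p.1 : ℝ) : ℂ) * I * p.2)‖ ≤ C :=
    hϖ.ae_norm_cexp_le.mono fun p hp => hp (-p.1) (abs_neg _)
  set G : ℝ × ℂ → ℂ := fun p => cexp (((-p.1 : ℝ) : ℂ) * I * p.2) * g p
  have hgG : ∀ p, g p = cexp (p.1 * I * p.2) * G p := fun p => by
    simp [G, ← mul_assoc, ← Complex.exp_add]
  have hG : MemLp G 2 (ν.prod (volume.restrict ϖ)) := (hprod ▸ hg).mul'
    (memLp_top_of_bound (by fun_prop) C hbound_neg)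
  have hGslice : ∀ᵐ η ∂ν, ∀ δ > 0,
      ∃ s ∈ A2extSubmodule ϖ a b 0, ∫ z in ϖ, ‖G (η, z) - s z‖ ^ 2 < δ := by
    filter_upwards [ae_restrict_of_ae_restrict_of_subset Ioo_subset_Icc_self hgη] with η hη
    have hη0 := A2eta_twist hϖm (fun _ => hϖ.abs_im_le) (-η) hη
    rw [add_neg_cancel] at hη0
    exact hη0.2
  obtain ⟨H, hH, hHslice, hGH⟩ := exists_memLp_forall_slice_mem_integral_norm_sub_sq_lt
    (A2extSubmodule ϖ a b 0) (fun s hs => hs.1.2) hG hGslice (div_pos hε (pow_pos hC 2))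
  refine ⟨fun p => cexp (p.1 * I * p.2) * H p,
    ⟨hprod ▸ hH.mul' (memLp_top_of_bound (by fun_prop) C hbound), ae_of_all _ fun η => ?_⟩, ?_⟩
  · simpa using A2ext_twist hϖm (fun _ => hϖ.abs_im_le) η (hHslice η)
  rw [hprod]
  calc ∫ p, ‖g p - cexp (p.1 * I * p.2) * H p‖ ^ 2 ∂_
      = ∫ p, ‖cexp (p.1 * I * p.2) * (G p - H p)‖ ^ 2 ∂_ := by
        congr 1 with p
        rw [mul_sub, ← hgG]
    _ ≤ C ^ 2 * ∫ p, ‖G p - H p‖ ^ 2 ∂_ := integral_norm_mul_sq_le (hG.sub hH) hbound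
    _ < C ^ 2 * (ε / C ^ 2) := by gcongr
    _ = ε := by field_simp

/-- `ℋ_η` is a dense subspace of `L²(−π,π; A²_η(ϖ))`. -/
theorem statement6 (M a b : ℝ) (hM : 0 < M) (hab : a < b)
    (ϖ : Set ℂ) (hϖ : cellOK ϖ M a b) :
    HEta ϖ (PiDom ϖ) a b ⊆ L2AEta ϖ (PiDom ϖ) a b ∧
    ∀ g ∈ L2AEta ϖ (PiDom ϖ) a b, ∀ ε > (0:ℝ), ∃ h ∈ HEta ϖ (PiDom ϖ) a b,
      (∫ p in (Ioo (-Real.pi) Real.pi) ×ˢ ϖ, ‖g p - h p‖ ^ 2) < ε :=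
  statement6_general M a b ϖ hϖ

end
end
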